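/- Hankel transform of the expansion of sech²: define b(n) = iteratedDeriv n (fun x => (cosh x)⁻¹ ^ 2) 0, i.e., the n-th coefficient of the exponential power series expansion of sech²(x) at 0. Then for every natural number n, the determinant of the (n+1)×(n+1) Hankel matrix with (i,j) entry b(i+j) equals ∏_{k=0}^{n} ((k+2)·(1-(k+2)))^{n-k}. -/

import Mathlib

open Polynomial Real

noncomputable def Dop : Module.End ℝ (Polynomial ℝ) :=
  (LinearMap.mulLeft ℝ ((1 : ℝ[X]) - X ^ 2)).comp
    (Polynomial.derivative : ℝ[X] →ₗ[ℝ] ℝ[X])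

lemma Dop_apply (p : ℝ[X]) : Dop p = ((1 : ℝ[X]) - X ^ 2) * derivative p := rfl

lemma X_pow_dvd_Dop {j : ℕ} {q : ℝ[X]} (h : X ^ (j + 1) ∣ q) : X ^ j ∣ Dop q := by
  obtain ⟨r, rfl⟩ := h
  refine ⟨((1 : ℝ[X]) - X ^ 2) * (C ((j : ℝ) + 1) * r + X * derivative r), ?_⟩
  rw [Dop_apply, derivative_mul, derivative_X_pow, show j + 1 - 1 = j from rfl]
  push_cast
  simp only [map_add, map_one]
  ring

lemma X_pow_dvd_Dop_pow (m : ℕ) : ∀ (j : ℕ) (q : ℝ[X]), X ^ j ∣ q → X ^ (j - m) ∣ (Dop ^ m) q := by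
  induction m with
  | zero => intro j q h; simpa using h
  | succ m ih =>
    intro j q h
    rw [pow_succ, Module.End.mul_apply]
    match j with
    | 0 => simpa using dvd_refl _
    | j + 1 =>
      have : X ^ j ∣ Dop q := X_pow_dvd_Dop h
      simpa [Nat.succ_sub_succ] using ih j (Dop q) this

lemma eval_zero_of_X_dvd {q : ℝ[X]} (h : X ∣ q) : q.eval 0 = 0 := by
  rw [← coeff_zero_eq_eval_zero, ← Polynomial.X_dvd_iff]
  exact h

noncomputable def S (n : ℕ) : ℝ[X] := X ^ n * ((1 : ℝ[X]) - X ^ 2)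

lemma X_pow_dvd_S (n : ℕ) : X ^ n ∣ S n := ⟨_, rfl⟩

lemma Dop_S (n : ℕ) :
    Dop (S (n + 1)) = ((n : ℝ) + 1) • S n - ((n : ℝ) + 3) • S (n + 2) := by
  rw [Dop_apply, S, derivative_mul, derivative_X_pow]
  simp only [S, smul_eq_C_mul, derivative_one, derivative_X_pow, map_sub, map_one,
    Nat.add_sub_cancel, map_add, map_ofNat]
  push_cast
  simp only [map_add, map_one, map_ofNat]
  ring

lemma eval0_Dop_pow_S (n : ℕ) : ((Dop ^ n) (S n)).eval 0 = (n.factorial : ℝ) := by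
  induction n with
  | zero => simp [S]
  | succ n ih =>
    have h2 : ((Dop ^ n) (S (n + 2))).eval 0 = 0 := by
      apply eval_zero_of_X_dvd
      have := X_pow_dvd_Dop_pow n (n + 2) (S (n + 2)) (X_pow_dvd_S (n + 2))
      have h22 : n + 2 - n = 2 := by omega
      rw [h22] at this
      exact dvd_trans (dvd_pow_self X two_ne_zero) this
    rw [pow_succ, Module.End.mul_apply, Dop_S, map_sub, map_smul, map_smul]
    simp only [Polynomial.eval_sub, Polynomial.eval_smul, smul_eq_mul, ih, h2,
      Nat.factorial_succ]
    push_cast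
    ring

noncomputable def P : ℕ → ℝ[X]
  | 0 => 1
  | 1 => X
  | (n + 2) => X * P (n + 1) + ((((n : ℝ) + 1) * ((n : ℝ) + 2)) : ℝ) • P n

lemma P_monic_natDegree (n : ℕ) : (P n).Monic ∧ (P n).natDegree = n := by
  induction n using Nat.twoStepInduction with
  | zero => exact ⟨monic_one, natDegree_one⟩
  | one => exact ⟨monic_X, natDegree_X⟩
  | more n ih ih1 =>
    have hm : (X * P (n + 1)).Monic := monic_X.mul ih1.1
    have hd : (X * P (n + 1)).natDegree = n + 2 := by
      rw [natDegree_mul X_ne_zero ih1.1.ne_zero, natDegree_X, ih1.2]; omega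
    have hPd : (P n).degree = (n : WithBot ℕ) := by
      rw [degree_eq_natDegree ih.1.ne_zero, ih.2]
    have hXd : (X * P (n + 1)).degree = ((n + 2 : ℕ) : WithBot ℕ) := by
      rw [degree_eq_natDegree hm.ne_zero, hd]
    have hlt : (((((n : ℝ) + 1) * ((n : ℝ) + 2)) : ℝ) • P n).degree < (X * P (n + 1)).degree := by
      refine lt_of_le_of_lt ((degree_smul_le _ _).trans hPd.le) ?_
      rw [hXd]
      have hnn : n < n + 2 := by omega
      exact_mod_cast hnn
    refine ⟨hm.add_of_left hlt, ?_⟩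
    show (X * P (n + 1) + _).natDegree = n + 2
    rw [natDegree_eq_of_degree_eq (degree_add_eq_left_of_degree_lt hlt), hd]

lemma P_coeff_self (n : ℕ) : (P n).coeff n = 1 := by
  have h := P_monic_natDegree n
  simpa [h.2] using h.1.coeff_natDegree

lemma P_coeff_of_lt {n k : ℕ} (h : n < k) : (P n).coeff k = 0 := by
  apply coeff_eq_zero_of_natDegree_lt
  rw [(P_monic_natDegree n).2]
  exact h

noncomputable def Q (n : ℕ) : ℝ[X] :=
  (Polynomial.aeval Dop (P n)) ((1 : ℝ[X]) - X ^ 2)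

lemma Q_eq (n : ℕ) :
    Q n = (((-1 : ℝ) ^ n * ((n + 1).factorial : ℝ)) : ℝ) • S n := by
  induction n using Nat.twoStepInduction with
  | zero => simp [Q, P, S]
  | one =>
    show (Polynomial.aeval Dop X) ((1 : ℝ[X]) - X ^ 2) = _
    rw [aeval_X]
    rw [Dop_apply]
    simp [S, smul_eq_C_mul]
    ring_nf
    simp only [map_ofNat]
  | more n ih ih1 =>
    have hstep : Q (n + 2) = Dop (Q (n + 1)) + ((((n : ℝ) + 1) * ((n : ℝ) + 2)) : ℝ) • Q n := by
      show (Polynomial.aeval Dop (X * P (n + 1) + _)) _ = _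
      rw [map_add, map_smul, map_mul, aeval_X]
      rfl
    rw [hstep, ih1, ih, map_smul, Dop_S]
    rw [smul_sub, smul_smul, smul_smul, smul_smul]
    have hfac2 : (((n + 3).factorial : ℝ)) = ((n + 3 : ℕ) : ℝ) * ((n + 2).factorial : ℝ) := by
      exact_mod_cast congrArg Nat.cast (Nat.factorial_succ (n + 2))
    have hfac1 : (((n + 2).factorial : ℝ)) = ((n + 2 : ℕ) : ℝ) * ((n + 1).factorial : ℝ) := by
      exact_mod_cast congrArg Nat.cast (Nat.factorial_succ (n + 1))
    have hz : ((-1 : ℝ) ^ (n + 1) * ((n + 2).factorial : ℝ) * ((n : ℝ) + 1)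
        + (((n : ℝ) + 1) * ((n : ℝ) + 2)) * ((-1 : ℝ) ^ n * ((n + 1).factorial : ℝ))) = 0 := by
      rw [hfac1]; push_cast; ring
    have key : ((-1 : ℝ) ^ (n + 1) * ((n + 2).factorial : ℝ) * ((n : ℝ) + 1)) • S n
        - ((-1 : ℝ) ^ (n + 1) * ((n + 2).factorial : ℝ) * ((n : ℝ) + 3)) • S (n + 2)
        + ((((n : ℝ) + 1) * ((n : ℝ) + 2)) * ((-1 : ℝ) ^ n * ((n + 1).factorial : ℝ))) • S n
        = ((-1 : ℝ) ^ (n + 2) * ((n + 3).factorial : ℝ)) • S (n + 2) := by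
      rw [sub_add_eq_add_sub, ← add_smul, hz, zero_smul, zero_sub, ← neg_smul]
      congr 1
      rw [hfac2]; push_cast; ring
    convert key using 2 <;> ring

lemma hasDerivAt_tanh (x : ℝ) : HasDerivAt Real.tanh (1 - Real.tanh x ^ 2) x := by
  have h : HasDerivAt (fun x : ℝ => Real.sinh x / Real.cosh x)
      ((Real.cosh x * Real.cosh x - Real.sinh x * Real.sinh x) / Real.cosh x ^ 2) x :=
    (Real.hasDerivAt_sinh x).div (Real.hasDerivAt_cosh x) (Real.cosh_pos x).ne'
  have hval : (Real.cosh x * Real.cosh x - Real.sinh x * Real.sinh x) / Real.cosh x ^ 2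
      = 1 - Real.tanh x ^ 2 := by
    rw [Real.tanh_eq_sinh_div_cosh, div_pow]
    have hs := Real.cosh_sq_sub_sinh_sq x
    field_simp [(Real.cosh_pos x).ne']
    all_goals nlinarith [hs]
  have hfun : (fun x : ℝ => Real.sinh x / Real.cosh x) = Real.tanh := by
    funext y
    rw [Real.tanh_eq_sinh_div_cosh]
  rw [hval, hfun] at h
  exact h

lemma iteratedDeriv_sech_sq (m : ℕ) :
    iteratedDeriv m (fun x : ℝ => (Real.cosh x)⁻¹ ^ 2)
      = fun x : ℝ => (((Dop ^ m) ((1 : ℝ[X]) - X ^ 2)).eval (Real.tanh x)) := by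
  induction m with
  | zero =>
    funext x
    simp only [iteratedDeriv_zero, pow_zero, Module.End.one_apply, Polynomial.eval_sub,
      Polynomial.eval_one, Polynomial.eval_pow, Polynomial.eval_X]
    rw [Real.tanh_eq_sinh_div_cosh, div_pow]
    have hc := (Real.cosh_pos x).ne'
    have hs := Real.cosh_sq_sub_sinh_sq x
    field_simp
    all_goals nlinarith [hs]
  | succ m ih =>
    funext x
    set q : ℝ[X] := (Dop ^ m) ((1 : ℝ[X]) - X ^ 2) with hq
    rw [iteratedDeriv_succ, ih]
    have h : HasDerivAt (fun x : ℝ => q.eval (Real.tanh x))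
        (q.derivative.eval (Real.tanh x) * (1 - Real.tanh x ^ 2)) x :=
      (q.hasDerivAt (Real.tanh x)).comp x (hasDerivAt_tanh x)
    rw [h.deriv, show (Dop ^ (m + 1)) = Dop * Dop ^ m from pow_succ' Dop m,
      Module.End.mul_apply, ← hq, Dop_apply]
    simp only [Polynomial.eval_mul, Polynomial.eval_sub, Polynomial.eval_one,
      Polynomial.eval_pow, Polynomial.eval_X]
    ring

lemma T_entry (N i m : ℕ) (h : i ≤ N) :
    ∑ k ∈ Finset.range (N + 1),
      (P i).coeff k * (((Dop ^ (k + m)) ((1 : ℝ[X]) - X ^ 2)).eval 0)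
      = ((Dop ^ m) (Q i)).eval 0 := by
  have hdeg : (P i).natDegree < N + 1 := by rw [(P_monic_natDegree i).2]; omega
  have hQ : Q i = ∑ k ∈ Finset.range (N + 1), (P i).coeff k • (Dop ^ k) ((1 : ℝ[X]) - X ^ 2) := by
    rw [Q, Polynomial.aeval_eq_sum_range' hdeg]
    simp only [LinearMap.sum_apply, LinearMap.smul_apply]
  rw [hQ, map_sum]
  rw [Polynomial.eval_finset_sum]
  refine Finset.sum_congr rfl fun k _ => ?_
  rw [map_smul, Polynomial.eval_smul, smul_eq_mul]
  congr 2
  rw [← Module.End.mul_apply, ← pow_add, Nat.add_comm k m]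

lemma prod_g (m : ℕ) :
    ∏ k ∈ Finset.range m, ((((k : ℤ) + 2) * (1 - ((k : ℤ) + 2)) : ℤ) : ℝ)
      = (-1 : ℝ) ^ m * ((m + 1).factorial : ℝ) * (m.factorial : ℝ) := by
  induction m with
  | zero => simp
  | succ m ih =>
    rw [Finset.prod_range_succ, ih]
    have h1 : (((m + 2).factorial : ℝ)) = ((m : ℝ) + 2) * ((m + 1).factorial : ℝ) := by
      exact_mod_cast congrArg Nat.cast (Nat.factorial_succ (m + 1))
    have h2 : (((m + 1).factorial : ℝ)) = ((m : ℝ) + 1) * ((m.factorial : ℝ)) := by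
      exact_mod_cast congrArg Nat.cast (Nat.factorial_succ m)
    rw [h1, h2]
    push_cast
    ring

lemma prod_eq (n : ℕ) :
    ∏ i ∈ Finset.range (n + 1), ((-1 : ℝ) ^ i * ((i + 1).factorial : ℝ) * (i.factorial : ℝ))
      = ∏ k ∈ Finset.range (n + 1),
          ((((k : ℤ) + 2) * (1 - ((k : ℤ) + 2)) : ℤ) : ℝ) ^ (n - k) := by
  induction n with
  | zero => simp
  | succ n ih =>
    rw [Finset.prod_range_succ (f := fun i =>
      ((-1 : ℝ) ^ i * ((i + 1).factorial : ℝ) * (i.factorial : ℝ))), ih]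
    rw [Finset.prod_range_succ (f := fun k =>
      ((((k : ℤ) + 2) * (1 - ((k : ℤ) + 2)) : ℤ) : ℝ) ^ (n + 1 - k))]
    rw [Nat.sub_self, pow_zero, mul_one]
    have hsplit : ∀ k ∈ Finset.range (n + 1),
        ((((k : ℤ) + 2) * (1 - ((k : ℤ) + 2)) : ℤ) : ℝ) ^ (n + 1 - k)
        = ((((k : ℤ) + 2) * (1 - ((k : ℤ) + 2)) : ℤ) : ℝ) ^ (n - k)
          * ((((k : ℤ) + 2) * (1 - ((k : ℤ) + 2)) : ℤ) : ℝ) := by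
      intro k hk
      rw [Finset.mem_range] at hk
      rw [← pow_succ]
      congr 1
      omega
    rw [Finset.prod_congr rfl hsplit, Finset.prod_mul_distrib, prod_g]

theorem hankel_transform_sech_sq (n : ℕ) :
    Matrix.det (Matrix.of fun i j : Fin (n + 1) =>
        iteratedDeriv ((i : ℕ) + (j : ℕ)) (fun x : ℝ => (Real.cosh x)⁻¹ ^ 2) 0)
      = ∏ k ∈ Finset.range (n + 1),
          ((((k : ℤ) + 2) * (1 - ((k : ℤ) + 2)) : ℤ) : ℝ) ^ (n - k) := by
  classical
  set H : Matrix (Fin (n + 1)) (Fin (n + 1)) ℝ := Matrix.of fun i j : Fin (n + 1) =>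
    iteratedDeriv ((i : ℕ) + (j : ℕ)) (fun x : ℝ => (Real.cosh x)⁻¹ ^ 2) 0 with hH
  have hHentry : ∀ i j : Fin (n + 1),
      H i j = ((Dop ^ ((i : ℕ) + (j : ℕ))) ((1 : ℝ[X]) - X ^ 2)).eval 0 := by
    intro i j
    show iteratedDeriv _ _ 0 = _
    rw [iteratedDeriv_sech_sq]
    simp only [Real.tanh_zero]
  set U : Matrix (Fin (n + 1)) (Fin (n + 1)) ℝ :=
    Matrix.of fun i k : Fin (n + 1) => (P i).coeff k with hU
  have hUlow : U.BlockTriangular OrderDual.toDual := by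
    intro i j hij
    have : (i : ℕ) < (j : ℕ) := hij
    exact P_coeff_of_lt this
  have hUdet : U.det = 1 := by
    rw [Matrix.det_of_lowerTriangular U hUlow]
    have : ∀ i : Fin (n + 1), U i i = 1 := fun i => P_coeff_self i
    simp [this]
  have hT : ∀ i m : Fin (n + 1), (U * H) i m = ((Dop ^ (m : ℕ)) (Q i)).eval 0 := by
    intro i m
    rw [Matrix.mul_apply]
    rw [← T_entry n i m (by omega : (i : ℕ) ≤ n)]
    rw [← Fin.sum_univ_eq_sum_range (fun k =>
      (P i).coeff k * (((Dop ^ (k + (m : ℕ))) ((1 : ℝ[X]) - X ^ 2)).eval 0)) (n + 1)]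
    refine Finset.sum_congr rfl fun k _ => ?_
    rw [hHentry]
    rfl
  have hdiag : ∀ i : Fin (n + 1),
      (U * H) i i = (-1 : ℝ) ^ (i : ℕ) * (((i : ℕ) + 1).factorial : ℝ)
        * (((i : ℕ).factorial : ℝ)) := by
    intro i
    rw [hT i i, Q_eq, map_smul, Polynomial.eval_smul, smul_eq_mul, eval0_Dop_pow_S]
  have hUHtri : (U * H).BlockTriangular id := by
    intro i j hij
    have hij' : (j : ℕ) < (i : ℕ) := hij
    rw [hT i j, Q_eq, map_smul, Polynomial.eval_smul, smul_eq_mul]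
    have hdvd : X ^ ((i : ℕ) - (j : ℕ)) ∣ (Dop ^ (j : ℕ)) (S (i : ℕ)) :=
      X_pow_dvd_Dop_pow (j : ℕ) (i : ℕ) (S (i : ℕ)) (X_pow_dvd_S (i : ℕ))
    have hx : X ∣ (Dop ^ (j : ℕ)) (S (i : ℕ)) := by
      refine dvd_trans ?_ hdvd
      exact dvd_pow_self X (by omega)
    rw [eval_zero_of_X_dvd hx, mul_zero]
  have hdetH : H.det = ∏ i : Fin (n + 1), (U * H) i i := by
    have h1 : (U * H).det = U.det * H.det := Matrix.det_mul U H
    rw [hUdet, one_mul] at h1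
    rw [← h1, Matrix.det_of_upperTriangular hUHtri]
  show H.det = _
  rw [hdetH]
  have : ∀ i : Fin (n + 1), (U * H) i i
      = (fun k : ℕ => (-1 : ℝ) ^ k * ((k + 1).factorial : ℝ) * ((k).factorial : ℝ)) (i : ℕ) :=
    fun i => hdiag i
  rw [Finset.prod_congr rfl (fun i _ => this i),
    Fin.prod_univ_eq_prod_range (fun k : ℕ =>
      (-1 : ℝ) ^ k * ((k + 1).factorial : ℝ) * ((k).factorial : ℝ)) (n + 1)]
  exact prod_eq n
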